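/- arXiv:1709.06559 — 3 statements merged into one kernel-verified Lean document; each statement's English description precedes it below -/
import Mathlib

section
/- Let (L,·) be a loop, A(L) a subgroup of its automorphism group, and H(L) the A(L)-holomorph of (L,·). If H(L) is an Osborn loop, then for all x, y ∈ L and all φ ∈ A(L): (y·x)·(x^λ·φ⁻¹(x)) = y·φ⁻¹(x), and x·(x^λ·φ⁻¹(x)) = φ⁻¹(x). -/
/-- A loop: a set with multiplication, left and right division, and a
two-sided identity element, such that all translations are bijections
(expressed via the division operations). -/
structure Loop (L : Type*) where
  mul : L → L → L
  ldiv : L → L → L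
  rdiv : L → L → L
  e : L
  mul_ldiv : ∀ x y, mul x (ldiv x y) = y
  ldiv_mul : ∀ x y, ldiv x (mul x y) = y
  rdiv_mul : ∀ x y, mul (rdiv y x) x = y
  mul_rdiv : ∀ x y, rdiv (mul y x) x = y
  e_mul : ∀ x, mul e x = x
  mul_e : ∀ x, mul x e = x

namespace Loop

variable {L : Type*} (Q : Loop L)

/-- The left inverse `x^λ`, the unique element with `x^λ · x = e`. -/
def linv (x : L) : L := Q.rdiv Q.e x

/-- The right inverse `x^ρ`, the unique element with `x · x^ρ = e`. -/
def rinv (x : L) : L := Q.ldiv x Q.e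

/-- A loop is Osborn if `x·((y·z)·x) = (x·((y·x^λ)·x))·(z·x)` for all `x,y,z`. -/
def IsOsborn : Prop :=
  ∀ x y z, Q.mul x (Q.mul (Q.mul y z) x) =
    Q.mul (Q.mul x (Q.mul (Q.mul y (Q.linv x)) x)) (Q.mul z x)

/-- The automorphism group of a loop, as a subgroup of the permutation group. -/
def autGroup : Subgroup (Equiv.Perm L) where
  carrier := {α | ∀ x y, α (Q.mul x y) = Q.mul (α x) (α y)}
  one_mem' := fun _ _ => rfl
  mul_mem' := by
    intro α β ha hb x y
    simp only [Equiv.Perm.mul_apply]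
    rw [hb x y, ha]
  inv_mem' := by
    intro α ha x y
    apply α.injective
    rw [ha]
    simp

theorem mem_autGroup_iff {α : Equiv.Perm L} :
    α ∈ Q.autGroup ↔ ∀ x y, α (Q.mul x y) = Q.mul (α x) (α y) := Iff.rfl

theorem aut_fix_e {α : Equiv.Perm L} (hα : α ∈ Q.autGroup) : α Q.e = Q.e := by
  have h1 : α (Q.mul Q.e Q.e) = Q.mul (α Q.e) (α Q.e) := hα Q.e Q.e
  rw [Q.mul_e] at h1
  have h2 : Q.mul (α Q.e) (α Q.e) = Q.mul (α Q.e) Q.e := by rw [Q.mul_e, ← h1]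
  have h3 := congrArg (Q.ldiv (α Q.e)) h2
  rwa [Q.ldiv_mul, Q.ldiv_mul] at h3

/-- The `A`-holomorph of a loop `(L,·)`: the loop on `A × L` with multiplication
`(α,x)∘(β,y) = (α∘β, β(x)·y)`, where `A` is a subgroup of the automorphism group. -/
def Holomorph (A : Subgroup (Equiv.Perm L)) (hA : A ≤ Q.autGroup) : Loop (A × L) where
  mul p q := (p.1 * q.1, Q.mul ((q.1 : Equiv.Perm L) p.2) q.2)
  ldiv p r := (p.1⁻¹ * r.1, Q.ldiv (((p.1⁻¹ * r.1 : A) : Equiv.Perm L) p.2) r.2)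
  rdiv r q := (r.1 * q.1⁻¹, ((q.1⁻¹ : A) : Equiv.Perm L) (Q.rdiv r.2 q.2))
  e := (1, Q.e)
  mul_ldiv p r := by
    refine Prod.ext ?_ ?_
    · simp
    · simp [Q.mul_ldiv]
  ldiv_mul p q := by
    refine Prod.ext ?_ ?_
    · simp
    · simp [inv_mul_cancel_left, Q.ldiv_mul]
  rdiv_mul r q := by
    refine Prod.ext ?_ ?_
    · simp
    · simp [Q.rdiv_mul]
  mul_rdiv p q := by
    refine Prod.ext ?_ ?_
    · simp
    · simp [Q.mul_rdiv]
  e_mul p := by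
    refine Prod.ext ?_ ?_
    · simp
    · simp [Q.aut_fix_e (hA p.1.2), Q.e_mul]
  mul_e p := by
    refine Prod.ext ?_ ?_
    · simp
    · simp [Q.mul_e]

/-- A triple `(A,B,C)` of bijections of `L` is an autotopism of `(L,·)` if
`A(x)·B(y) = C(x·y)` for all `x, y`. -/
def IsAutotopism (A B C : L → L) : Prop :=
  Function.Bijective A ∧ Function.Bijective B ∧ Function.Bijective C ∧
    ∀ x y, Q.mul (A x) (B y) = C (Q.mul x y)

/-- A bijection `U` is ρ-regular if `(I,U,U)` is an autotopism. -/
def IsRhoRegular (U : L → L) : Prop := Q.IsAutotopism id U U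

/-- A bijection `U` is λ-regular if `(U,I,U)` is an autotopism. -/
def IsLambdaRegular (U : L → L) : Prop := Q.IsAutotopism U id U

/-- `U'` is an adjoint of the bijection `U` if `(U, U'⁻¹, I)` is an autotopism. -/
def IsMuAdjoint (U U' : L → L) : Prop :=
  letI : Nonempty L := ⟨Q.e⟩
  Function.Bijective U' ∧ Q.IsAutotopism U (Function.invFun U') id

/-- `U` is μ-regular if it has an adjoint, i.e. `(U, U'⁻¹, I)` is an
autotopism for some bijection `U'`. The μ-regular bijections form `Φ(L,·)`. -/
def IsMuRegular (U : L → L) : Prop := ∃ U', Q.IsMuAdjoint U U'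

/-- `U'` belongs to `Ψ(L,·)`, the group of adjoints of μ-regular bijections. -/
def IsPsi (U' : L → L) : Prop := ∃ U, Q.IsMuAdjoint U U'

/-- Membership in the left nucleus `N_λ`. -/
def InNlambda (a : L) : Prop := ∀ y z, Q.mul a (Q.mul y z) = Q.mul (Q.mul a y) z

/-- Membership in the middle nucleus `N_μ`. -/
def InNmu (a : L) : Prop := ∀ y z, Q.mul (Q.mul y a) z = Q.mul y (Q.mul a z)

/-- Membership in the right nucleus `N_ρ`. -/
def InNrho (a : L) : Prop := ∀ y z, Q.mul (Q.mul y z) a = Q.mul y (Q.mul z a)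

/-- Membership in the nucleus `N = N_λ ∩ N_μ ∩ N_ρ`. -/
def InNucleus (a : L) : Prop := Q.InNlambda a ∧ Q.InNmu a ∧ Q.InNrho a

/-- Membership in the center `Z = N ∩ C`. -/
def InCenter (a : L) : Prop := Q.InNucleus a ∧ ∀ x, Q.mul a x = Q.mul x a

end Loop

/-!
Inside `H(L)` the Osborn identity, evaluated at elements whose automorphism components are
trivial or mutually inverse, yields two facts about `(L,·)`: the loop `(L,·)` is Osborn, and
`(b·π(x^λ))·π(x) = (b·x^λ)·x` for every `π ∈ A(L)`. Evaluated at `(1,π x), (π⁻¹,y), (1,z)` it then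
gives the shifted identity `x·((y·z)·π(x)) = K(y)·(z·π(x))`, where `K(y) = x·((y·x^λ)·x)`.
With `z = e` and with `z = x^λ` this becomes `x·(y·v) = K(y)·v` and `x·(u·v) = (x·(u·x))·(x^λ·v)`
for `v = π(x)`; since `K` is onto and `x·(u·x) = K(u)·x` by the Osborn law of `(L,·)`,
the two combine into `(y·x)·(x^λ·v) = y·v`.
-/

namespace Loop

variable {L : Type*} (Q : Loop L)

theorem mul_right_cancel {a b : L} (c : L) (h : Q.mul a c = Q.mul b c) : a = b := by
  simpa only [Q.mul_rdiv] using congrArg (Q.rdiv · c) h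

theorem mul_left_cancel {a b : L} (c : L) (h : Q.mul c a = Q.mul c b) : a = b := by
  simpa only [Q.ldiv_mul] using congrArg (Q.ldiv c) h

theorem map_linv {α : Equiv.Perm L} (hα : α ∈ Q.autGroup) (x : L) :
    α (Q.linv x) = Q.linv (α x) := by
  refine Q.mul_right_cancel (α x) ?_
  rw [← hα, linv, linv, Q.rdiv_mul, Q.rdiv_mul, Q.aut_fix_e hα]

theorem IsOsborn.mul_mul_self {Q : Loop L} (hQ : Q.IsOsborn) (x u : L) :
    Q.mul x (Q.mul u x) = Q.mul (Q.mul x (Q.mul (Q.mul u (Q.linv x)) x)) x := by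
  simpa only [Q.mul_e, Q.e_mul] using hQ x u Q.e

theorem IsOsborn.mul_mul_linv_mul_eq {Q : Loop L} (hQ : Q.IsOsborn) {x v : L}
    (hshift : ∀ y z, Q.mul x (Q.mul (Q.mul y z) v) =
      Q.mul (Q.mul x (Q.mul (Q.mul y (Q.linv x)) x)) (Q.mul z v)) (y : L) :
    Q.mul (Q.mul y x) (Q.mul (Q.linv x) v) = Q.mul y v := by
  set K : L → L := fun y => Q.mul x (Q.mul (Q.mul y (Q.linv x)) x)
  have h_e (u : L) : Q.mul x (Q.mul u v) = Q.mul (K u) v := by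
    simpa only [Q.mul_e, Q.e_mul] using hshift u Q.e
  have h_linv (u : L) :
      Q.mul x (Q.mul u v) = Q.mul (Q.mul x (Q.mul u x)) (Q.mul (Q.linv x) v) := by
    simpa only [K, Q.rdiv_mul] using hshift (Q.rdiv u (Q.linv x)) (Q.linv x)
  obtain ⟨u, rfl⟩ : ∃ u, K u = y :=
    ⟨Q.rdiv (Q.rdiv (Q.ldiv x y) x) (Q.linv x), by simp only [K, Q.rdiv_mul, Q.mul_ldiv]⟩
  rw [← hQ.mul_mul_self, ← h_linv, h_e]

section Holomorph

variable {A : Subgroup (Equiv.Perm L)} {hA : A ≤ Q.autGroup}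

@[simp]
theorem holomorph_mul (p q : A × L) :
    (Q.Holomorph A hA).mul p q = (p.1 * q.1, Q.mul ((q.1 : Equiv.Perm L) p.2) q.2) := rfl

@[simp]
theorem holomorph_linv (p : A × L) :
    (Q.Holomorph A hA).linv p = (p.1⁻¹, ((p.1⁻¹ : A) : Equiv.Perm L) (Q.linv p.2)) := by
  simp [linv, Holomorph]

variable {Q}

/-- The Osborn identity of `H(L)` at `(1,x), (β,y), (1,z)`. -/
theorem IsOsborn.of_holomorph_apply (hH : (Q.Holomorph A hA).IsOsborn) (β : A) (x y z : L) :
    Q.mul ((β : Equiv.Perm L) x) (Q.mul (Q.mul y z) x) =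
      Q.mul (Q.mul ((β : Equiv.Perm L) x) (Q.mul (Q.mul y (Q.linv x)) x)) (Q.mul z x) := by
  simpa using congrArg Prod.snd (hH (1, x) (β, y) (1, z))

theorem IsOsborn.of_holomorph (hH : (Q.Holomorph A hA).IsOsborn) : Q.IsOsborn :=
  hH.of_holomorph_apply 1

theorem IsOsborn.mul_map_linv_mul_map_of_holomorph (hH : (Q.Holomorph A hA).IsOsborn)
    (π : A) (x b : L) :
    Q.mul (Q.mul b ((π : Equiv.Perm L) (Q.linv x))) ((π : Equiv.Perm L) x) =
      Q.mul (Q.mul b (Q.linv x)) x := by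
  have hπ : (π : Equiv.Perm L) ∈ Q.autGroup := hA π.2
  have h := congrArg Prod.snd (hH (1, x) (π⁻¹, ((π⁻¹ : A) : Equiv.Perm L) b) (π, Q.e))
  simp only [holomorph_mul, holomorph_linv, InvMemClass.coe_inv, Equiv.Perm.coe_inv,
    inv_mul_cancel, Equiv.apply_symm_apply, Q.mul_e, mul_one, OneMemClass.coe_one,
    Equiv.Perm.coe_one, id_eq, inv_one, one_mul, Q.e_mul, hπ _ _] at h
  exact Q.mul_left_cancel x (Q.mul_right_cancel x (h.symm.trans (hH.of_holomorph.mul_mul_self x b)))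

theorem IsOsborn.mul_mul_mul_map_of_holomorph (hH : (Q.Holomorph A hA).IsOsborn)
    (π : A) (x y z : L) :
    Q.mul x (Q.mul (Q.mul y z) ((π : Equiv.Perm L) x)) =
      Q.mul (Q.mul x (Q.mul (Q.mul y (Q.linv x)) x)) (Q.mul z ((π : Equiv.Perm L) x)) := by
  have h := hH.of_holomorph_apply π⁻¹ ((π : Equiv.Perm L) x) y z
  simp only [InvMemClass.coe_inv, Equiv.Perm.inv_def, Equiv.symm_apply_apply] at h
  rwa [← Q.map_linv (hA π.2), hH.mul_map_linv_mul_map_of_holomorph] at h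

end Holomorph

end Loop

/-- If `H(L)` is an Osborn loop, then for all `x, y ∈ L` and all
`φ ∈ A(L)`: `(y·x)·(x^λ·φ⁻¹(x)) = y·φ⁻¹(x)` and `x·(x^λ·φ⁻¹(x)) = φ⁻¹(x)`. -/
theorem holomorph_osborn_identities_phi_right {L : Type*} (Q : Loop L)
    (A : Subgroup (Equiv.Perm L)) (hA : A ≤ Q.autGroup) :
    (Q.Holomorph A hA).IsOsborn →
      ∀ (x y : L) (φ : A),
        Q.mul (Q.mul y x) (Q.mul (Q.linv x) (((φ⁻¹ : A) : Equiv.Perm L) x)) = Q.mul y (((φ⁻¹ : A) : Equiv.Perm L) x) ∧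
        Q.mul x (Q.mul (Q.linv x) (((φ⁻¹ : A) : Equiv.Perm L) x)) = (((φ⁻¹ : A) : Equiv.Perm L) x) := by
  intro hH x y φ
  have hshift := hH.of_holomorph.mul_mul_linv_mul_eq (hH.mul_mul_mul_map_of_holomorph φ⁻¹ x)
  exact ⟨hshift y, by simpa only [Q.e_mul] using hshift Q.e⟩
end

section
/- Let (L,·) be a loop, A(L) a subgroup of its automorphism group, and H(L) the A(L)-holomorph of (L,·). If H(L) is an Osborn loop, then for every x ∈ L and all φ ∈ A(L) the triples (I, U, U) are autotopisms of (L,·) for each of the bijections U₁ : y ↦ (y/x)·φ⁻¹(x), U₂ : y ↦ x·(((x\y)/x)·φ⁻¹(x)), and U₃ : y ↦ y·(x^λ·φ⁻¹(x)). -/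
namespace Loop

variable {L : Type*} (Q : Loop L)

/-- The Osborn law at `x` with the outer right factor `x` replaced by `x'`. -/
def IsOsbornAt (x x' : L) : Prop :=
  ∀ u w, Q.mul x (Q.mul (Q.mul u w) x') =
    Q.mul (Q.mul x (Q.mul (Q.mul u (Q.linv x)) x)) (Q.mul w x')

theorem mul_right_bijective (c : L) : Function.Bijective fun y => Q.mul y c :=
  Function.bijective_iff_has_inverse.mpr ⟨fun y => Q.rdiv y c, Q.mul_rdiv c, Q.rdiv_mul c⟩

theorem isAutotopism_mul_right_of_inNrho {c : L} (hc : Q.InNrho c) :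
    Q.IsAutotopism id (fun y => Q.mul y c) (fun y => Q.mul y c) :=
  ⟨Function.bijective_id, Q.mul_right_bijective c, Q.mul_right_bijective c,
    fun a b => (hc a b).symm⟩

theorem map_rdiv {α : Equiv.Perm L} (hα : α ∈ Q.autGroup) (y x : L) :
    α (Q.rdiv y x) = Q.rdiv (α y) (α x) := by
  rw [← Q.mul_rdiv (α x) (α (Q.rdiv y x)), ← hα, Q.rdiv_mul]

theorem isOsbornAt_of_holomorph {A : Subgroup (Equiv.Perm L)} {hA : A ≤ Q.autGroup}
    (hH : (Q.Holomorph A hA).IsOsborn) (ψ : A) (x : L) :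
    Q.IsOsbornAt x ((ψ : Equiv.Perm L) x) := by
  intro u w
  have hψ : (ψ : Equiv.Perm L).symm ∈ Q.autGroup := hA (ψ⁻¹).2
  have h := congrArg Prod.snd
    (hH (1, (ψ : Equiv.Perm L) x) (1, (ψ : Equiv.Perm L) u) (ψ⁻¹, w))
  simpa [Holomorph, linv, hψ _, Q.map_rdiv hψ, Q.aut_fix_e hψ, pull_end] using h

variable {Q}

theorem IsOsbornAt.mul_eq_mul_linv_mul {x x' : L} (hT : Q.IsOsbornAt x x') (v : L) :
    Q.mul x (Q.mul v x') = Q.mul (Q.mul x (Q.mul v x)) (Q.mul (Q.linv x) x') := by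
  simpa only [Q.rdiv_mul] using hT (Q.rdiv v (Q.linv x)) (Q.linv x)

theorem IsOsbornAt.mul_rdiv_mul {x x' : L} (hS : Q.IsOsbornAt x x) (hT : Q.IsOsbornAt x x')
    (a b : L) :
    Q.mul a (Q.mul (Q.rdiv b x) x') = Q.mul (Q.mul a b) (Q.mul (Q.linv x) x') := by
  -- `a = x·((u·x^λ)·x)` is solvable for `u`, so both laws apply with `a` as left factor.
  set u := Q.rdiv (Q.rdiv (Q.ldiv x a) x) (Q.linv x)
  have hu : Q.mul x (Q.mul (Q.mul u (Q.linv x)) x) = a := by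
    rw [Q.rdiv_mul, Q.rdiv_mul, Q.mul_ldiv]
  calc Q.mul a (Q.mul (Q.rdiv b x) x')
      = Q.mul x (Q.mul (Q.mul u (Q.rdiv b x)) x') := by rw [hT, hu]
    _ = Q.mul (Q.mul x (Q.mul (Q.mul u (Q.rdiv b x)) x)) (Q.mul (Q.linv x) x') :=
        hT.mul_eq_mul_linv_mul _
    _ = Q.mul (Q.mul a b) (Q.mul (Q.linv x) x') := by rw [hS, hu, Q.rdiv_mul]

theorem IsOsbornAt.rdiv_mul_eq_mul_linv_mul {x x' : L} (hS : Q.IsOsbornAt x x)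
    (hT : Q.IsOsbornAt x x') (b : L) :
    Q.mul (Q.rdiv b x) x' = Q.mul b (Q.mul (Q.linv x) x') := by
  simpa only [Q.e_mul] using hS.mul_rdiv_mul hT Q.e b

theorem IsOsbornAt.mul_ldiv_rdiv_mul_eq_mul_linv_mul {x x' : L} (hS : Q.IsOsbornAt x x)
    (hT : Q.IsOsbornAt x x') (b : L) :
    Q.mul x (Q.mul (Q.rdiv (Q.ldiv x b) x) x') = Q.mul b (Q.mul (Q.linv x) x') := by
  simpa only [Q.mul_ldiv] using hS.mul_rdiv_mul hT x (Q.ldiv x b)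

theorem IsOsbornAt.inNrho_linv_mul {x x' : L} (hS : Q.IsOsbornAt x x) (hT : Q.IsOsbornAt x x') :
    Q.InNrho (Q.mul (Q.linv x) x') := fun a b => by
  rw [← hS.mul_rdiv_mul hT, hS.rdiv_mul_eq_mul_linv_mul hT]

end Loop

/-- If `H(L)` is an Osborn loop, then for every `x ∈ L` and all
`φ ∈ A(L)` the triples `(I, U, U)` are autotopisms of `(L,·)` for
`U₁ : y ↦ (y/x)·φ⁻¹(x)`, `U₂ : y ↦ x·(((x\y)/x)·φ⁻¹(x))` and
`U₃ : y ↦ y·(x^λ·φ⁻¹(x))`. -/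
theorem holomorph_osborn_rho_autotopisms {L : Type*} (Q : Loop L)
    (A : Subgroup (Equiv.Perm L)) (hA : A ≤ Q.autGroup) :
    (Q.Holomorph A hA).IsOsborn →
      ∀ (x : L) (φ : A),
        Q.IsAutotopism id (fun y => Q.mul (Q.rdiv y x) (((φ⁻¹ : A) : Equiv.Perm L) x))
          (fun y => Q.mul (Q.rdiv y x) (((φ⁻¹ : A) : Equiv.Perm L) x)) ∧
        Q.IsAutotopism id (fun y => Q.mul x (Q.mul (Q.rdiv (Q.ldiv x y) x) (((φ⁻¹ : A) : Equiv.Perm L) x)))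
          (fun y => Q.mul x (Q.mul (Q.rdiv (Q.ldiv x y) x) (((φ⁻¹ : A) : Equiv.Perm L) x))) ∧
        Q.IsAutotopism id (fun y => Q.mul y (Q.mul (Q.linv x) (((φ⁻¹ : A) : Equiv.Perm L) x)))
          (fun y => Q.mul y (Q.mul (Q.linv x) (((φ⁻¹ : A) : Equiv.Perm L) x))) := by
  intro hH x φ
  have hS : Q.IsOsbornAt x x := Q.isOsbornAt_of_holomorph hH 1 x
  have hT := Q.isOsbornAt_of_holomorph hH φ⁻¹ x
  have hU₃ := Q.isAutotopism_mul_right_of_inNrho (hS.inNrho_linv_mul hT)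
  have hU₁ := funext (hS.rdiv_mul_eq_mul_linv_mul hT)
  have hU₂ := funext (hS.mul_ldiv_rdiv_mul_eq_mul_linv_mul hT)
  exact ⟨hU₁ ▸ hU₃, hU₂ ▸ hU₃, hU₃⟩
end

section
/- Let (L,·) be a loop, A(L) a subgroup of its automorphism group, and H(L) the A(L)-holomorph of (L,·). If H(L) is an Osborn loop, then for every x ∈ L and all α, φ ∈ A(L), the triples (y ↦ y·a, z ↦ a\z, I) are autotopisms of (L,·), both for a = α(x)·x^ρ and for a = x^λ·φ⁻¹(x); equivalently, (y·a)·(a\z) = y·z for all y, z ∈ L for each such a. -/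
/-!
Comparing second coordinates in the Osborn identity of `H(L)` at `(α,x)`, `(α,u)`, `(α⁻¹,α⁻¹v)`
gives `α(x)·((u·v)·x) = (α(x)·((u·x^λ)·x))·(v·x)`, the Osborn identity of `L` with the outer
`x` replaced by `α(x)` (for `α = 1` it is the Osborn identity of `L`). Playing the two against
each other shows that `a = α(x)·x^ρ` acts as `a·t = α(x)·(x\t)`, so `a` lies in the left nucleus.
In an Osborn loop the left nucleus is contained in the middle nucleus, and for `a ∈ N_μ`
we get `(y·a)·(a\z) = y·(a·(a\z)) = y·z`. Finally `x^λ·φ⁻¹(x)` is of the same form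
`φ(w)·w^ρ`, with `w = φ⁻¹(x^λ)`.
-/

namespace Loop

variable {L : Type*} (Q : Loop L)

local infixl:70 " ⋆ " => Q.mul

theorem mul_left_cancel_s10 {p q q' : L} (h : p ⋆ q = p ⋆ q') : q = q' := by
  simpa only [Q.ldiv_mul] using congrArg (Q.ldiv p) h

theorem linv_mul (x : L) : Q.linv x ⋆ x = Q.e := Q.rdiv_mul x Q.e

theorem mul_rinv (x : L) : x ⋆ Q.rinv x = Q.e := Q.mul_ldiv x Q.e

theorem rinv_linv (x : L) : Q.rinv (Q.linv x) = x :=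
  Q.mul_left_cancel_s10 (by rw [mul_rinv, linv_mul])

theorem map_rinv_of_mem_autGroup {α : Equiv.Perm L} (hα : α ∈ Q.autGroup) (x : L) :
    α (Q.rinv x) = Q.rinv (α x) :=
  Q.mul_left_cancel_s10 (by rw [mul_rinv, ← hα, mul_rinv, Q.aut_fix_e hα])

theorem bijective_mul_right (a : L) : Function.Bijective (· ⋆ a) :=
  Function.bijective_iff_has_inverse.mpr ⟨(Q.rdiv · a), Q.mul_rdiv a, Q.rdiv_mul a⟩

theorem bijective_ldiv (a : L) : Function.Bijective (Q.ldiv a) :=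
  Function.bijective_iff_has_inverse.mpr ⟨(a ⋆ ·), Q.mul_ldiv a, Q.ldiv_mul a⟩

theorem mul_mul_ldiv_of_inNmu {a : L} (ha : Q.InNmu a) (y z : L) :
    y ⋆ a ⋆ Q.ldiv a z = y ⋆ z := by
  rw [ha, mul_ldiv]

theorem isAutotopism_of_inNmu {a : L} (ha : Q.InNmu a) :
    Q.IsAutotopism (· ⋆ a) (Q.ldiv a) id :=
  ⟨Q.bijective_mul_right a, Q.bijective_ldiv a, Function.bijective_id,
    Q.mul_mul_ldiv_of_inNmu ha⟩

theorem IsOsborn.inNmu_of_inNlambda {Q : Loop L} (hL : Q.IsOsborn) {a : L}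
    (ha : Q.InNlambda a) : Q.InNmu a := by
  intro w t
  have h := hL w a (Q.rdiv t w)
  rwa [← ha, ← ha, linv_mul, mul_e, rdiv_mul, eq_comm] at h

def OsbornWith (f : L → L) : Prop :=
  ∀ x y z, f x ⋆ ((y ⋆ z) ⋆ x) = (f x ⋆ ((y ⋆ Q.linv x) ⋆ x)) ⋆ (z ⋆ x)

variable {Q}

theorem OsbornWith.mul_mul_eq_mul_ldiv {f : L → L} (hL : Q.IsOsborn) (hf : Q.OsbornWith f)
    (x s t : L) : f x ⋆ s ⋆ t = f x ⋆ Q.ldiv x (x ⋆ s ⋆ t) := by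
  have hfx := hf x (Q.rdiv (Q.rdiv s x) (Q.linv x)) (Q.rdiv t x)
  have hx := hL x (Q.rdiv (Q.rdiv s x) (Q.linv x)) (Q.rdiv t x)
  simp only [rdiv_mul] at hfx hx
  rw [← hx, ldiv_mul, hfx]

theorem OsbornWith.mul_rinv_mul {f : L → L} (hL : Q.IsOsborn) (hf : Q.OsbornWith f)
    (x t : L) : f x ⋆ Q.rinv x ⋆ t = f x ⋆ Q.ldiv x t := by
  rw [hf.mul_mul_eq_mul_ldiv hL, mul_rinv, e_mul]

theorem OsbornWith.inNlambda_mul_rinv {f : L → L} (hL : Q.IsOsborn) (hf : Q.OsbornWith f)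
    (x : L) : Q.InNlambda (f x ⋆ Q.rinv x) := by
  intro s t
  rw [hf.mul_rinv_mul hL, hf.mul_rinv_mul hL, hf.mul_mul_eq_mul_ldiv hL, mul_ldiv]

variable {A : Subgroup (Equiv.Perm L)} {hA : A ≤ Q.autGroup}

theorem osbornWith_of_isOsborn_holomorph (hO : (Q.Holomorph A hA).IsOsborn) (α : A) :
    Q.OsbornWith α := by
  intro x u v
  have h := congrArg Prod.snd (hO (α, x) (α, u) (α⁻¹, ((α⁻¹ : A) : Equiv.Perm L) v))
  simpa [Holomorph, linv, hA α.2 _ _, hA α⁻¹.2 _ _] using h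

theorem isOsborn_of_isOsborn_holomorph (hO : (Q.Holomorph A hA).IsOsborn) : Q.IsOsborn :=
  osbornWith_of_isOsborn_holomorph hO 1

theorem inNmu_mul_rinv_of_isOsborn_holomorph (hO : (Q.Holomorph A hA).IsOsborn) (α : A)
    (x : L) : Q.InNmu ((α : Equiv.Perm L) x ⋆ Q.rinv x) :=
  have hL := isOsborn_of_isOsborn_holomorph hO
  hL.inNmu_of_inNlambda ((osbornWith_of_isOsborn_holomorph hO α).inNlambda_mul_rinv hL x)

end Loop

/-- If `H(L)` is an Osborn loop, then for every `x ∈ L` and all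
`α, φ ∈ A(L)`, the triples `(y ↦ y·a, z ↦ a\z, I)` are autotopisms of `(L,·)`,
both for `a = α(x)·x^ρ` and for `a = x^λ·φ⁻¹(x)`; equivalently,
`(y·a)·(a\z) = y·z` for all `y, z ∈ L` for each such `a`. -/
theorem holomorph_osborn_mu_autotopisms {L : Type*} (Q : Loop L)
    (A : Subgroup (Equiv.Perm L)) (hA : A ≤ Q.autGroup) :
    (Q.Holomorph A hA).IsOsborn →
      ∀ (x : L) (α φ : A),
        (Q.IsAutotopism (fun y => Q.mul y (Q.mul ((α : Equiv.Perm L) x) (Q.rinv x))) (fun z => Q.ldiv (Q.mul ((α : Equiv.Perm L) x) (Q.rinv x)) z) id ∧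
          ∀ y z, Q.mul (Q.mul y (Q.mul ((α : Equiv.Perm L) x) (Q.rinv x))) (Q.ldiv (Q.mul ((α : Equiv.Perm L) x) (Q.rinv x)) z) = Q.mul y z) ∧
        (Q.IsAutotopism (fun y => Q.mul y (Q.mul (Q.linv x) (((φ⁻¹ : A) : Equiv.Perm L) x))) (fun z => Q.ldiv (Q.mul (Q.linv x) (((φ⁻¹ : A) : Equiv.Perm L) x)) z) id ∧
          ∀ y z, Q.mul (Q.mul y (Q.mul (Q.linv x) (((φ⁻¹ : A) : Equiv.Perm L) x))) (Q.ldiv (Q.mul (Q.linv x) (((φ⁻¹ : A) : Equiv.Perm L) x)) z) = Q.mul y z) := by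
  intro hO x α φ
  have ha := Loop.inNmu_mul_rinv_of_isOsborn_holomorph hO α x
  have hb : Q.InNmu (Q.mul (Q.linv x) (((φ⁻¹ : A) : Equiv.Perm L) x)) := by
    have h := Loop.inNmu_mul_rinv_of_isOsborn_holomorph hO φ
      (((φ⁻¹ : A) : Equiv.Perm L) (Q.linv x))
    rwa [← Q.map_rinv_of_mem_autGroup (hA (φ⁻¹).2), Q.rinv_linv, InvMemClass.coe_inv,
      Equiv.Perm.coe_inv, Equiv.apply_symm_apply] at h
  exact ⟨⟨Q.isAutotopism_of_inNmu ha, Q.mul_mul_ldiv_of_inNmu ha⟩,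
    ⟨Q.isAutotopism_of_inNmu hb, Q.mul_mul_ldiv_of_inNmu hb⟩⟩
end
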